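/- Let U be compact metric and J : (ℝ^d × U)² → ℝ L_J-Lipschitz. For (x,σ), (x',σ') ∈ ℝ^d × P(U) define f_σ(x,σ,x',σ') = (∫_U J(x,·,x',u') dσ'(u') − ∫_{U×U} J(x,w,x',u') dσ'(u')dσ(w)) σ ∈ M₀(U). Then f_σ is Lipschitz: ‖f_σ(y₁, y₁') − f_σ(y₂, y₂')‖_BL ≤ 2 L_J (1 + diam U) ( |x₁−x₂| + ‖σ₁−σ₂‖_BL + |x₁'−x₂'| + ‖σ₁'−σ₂'‖_BL ). -/

import Mathlib

open MeasureTheory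

/-- The (least) Lipschitz constant of a real function on a metric space. -/
noncomputable def lipConst {U : Type*} [MetricSpace U] (f : U → ℝ) : ℝ :=
  sInf {K : ℝ | 0 ≤ K ∧ ∀ u v, |f u - f v| ≤ K * dist u v}

/-- The bounded Lipschitz norm `sup|f| + Lip(f)` of a real function. -/
noncomputable def lipNorm {U : Type*} [MetricSpace U] (f : U → ℝ) : ℝ :=
  (⨆ u, |f u|) + lipConst f

/-- The dual bounded Lipschitz (BL) norm of a functional `I`. -/
noncomputable def blNormOf {U : Type*} [MetricSpace U] (I : (U → ℝ) → ℝ) : ℝ :=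
  sSup {r : ℝ | ∃ φ : U → ℝ, (∃ K, LipschitzWith K φ) ∧ lipNorm φ ≤ 1 ∧ r = I φ}

/-- Pairing of the replicator interaction term
`f_σ(x,σ,x',σ') = (∫ J(x,·,x',u')dσ'(u') − ∫∫ J(x,w,x',u')dσ'(u')dσ(w))σ`
with a test function `φ`. -/
noncomputable def fσPair {U : Type*} [MetricSpace U] [MeasurableSpace U] {d : ℕ}
    (J : (EuclideanSpace ℝ (Fin d) × U) → (EuclideanSpace ℝ (Fin d) × U) → ℝ)
    (x x' : EuclideanSpace ℝ (Fin d)) (σ σ' : Measure U) (φ : U → ℝ) : ℝ :=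
  ∫ u, φ u * ((∫ u', J (x, u) (x', u') ∂σ') -
      ∫ w, ∫ u', J (x, w) (x', u') ∂σ' ∂σ) ∂σ

/-!
Write `G u = ∫ J(x,u,x',u') dσ'(u')`, so that pairing `f_σ(x,σ,x',σ')` with a test function `φ`
gives `∫ φ (G - ∫ G dσ) dσ`, and pass from `(y₁, y₁')` to `(y₂, y₂')` in three steps.
Changing `(x, x')`, resp. `σ'`, moves `G` uniformly by at most `L_J (|x₁ - x₂| + |x₁' - x₂'|)`,
resp. `L_J (1 + diam U) ‖σ₁' - σ₂'‖_BL`, and a uniform change of `G` by `ε` moves the pairing by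
at most `2ε`. Changing `σ` with `G` fixed is BL duality applied to `φ (G - ∫ G dσ₁)`, whose sup
plus Lipschitz constant is at most `L_J (1 + diam U)` because `sup |φ| + Lip φ ≤ 1`, together with
the same duality for the centring constant `∫ G dσ₁ - ∫ G dσ₂`.
-/

section LipNorm

variable {U : Type*} [MetricSpace U]

lemma lipConst_nonneg (f : U → ℝ) : 0 ≤ lipConst f :=
  Real.sInf_nonneg fun _ hK => hK.1

lemma lipConst_le {f : U → ℝ} {K : ℝ} (hK0 : 0 ≤ K)
    (hK : ∀ u v, |f u - f v| ≤ K * dist u v) : lipConst f ≤ K :=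
  csInf_le ⟨0, fun _ hK => hK.1⟩ ⟨hK0, hK⟩

lemma abs_sub_le_lipConst_mul_dist {f : U → ℝ} {K : NNReal} (hf : LipschitzWith K f)
    (u v : U) : |f u - f v| ≤ lipConst f * dist u v := by
  rcases (dist_nonneg (x := u) (y := v)).eq_or_lt with h0 | h0
  · simp [dist_eq_zero.mp h0.symm]
  · rw [← div_le_iff₀ h0]
    refine le_csInf ⟨K, K.2, fun u v => ?_⟩ fun K' hK' => (div_le_iff₀ h0).mpr (hK'.2 u v)
    simpa [Real.dist_eq] using hf.dist_le_mul u v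

lemma lipschitzWith_toNNReal_of_abs_sub_le {f : U → ℝ} {K : ℝ} (hK0 : 0 ≤ K)
    (hK : ∀ u v, |f u - f v| ≤ K * dist u v) : LipschitzWith K.toNNReal f :=
  .of_dist_le_mul fun u v => by rw [Real.dist_eq, Real.coe_toNNReal _ hK0]; exact hK u v

lemma lipNorm_le [Nonempty U] {f : U → ℝ} {A K : ℝ} (hA : ∀ u, |f u| ≤ A) (hK0 : 0 ≤ K)
    (hK : ∀ u v, |f u - f v| ≤ K * dist u v) : lipNorm f ≤ A + K :=
  add_le_add (ciSup_le hA) (lipConst_le hK0 hK)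

lemma exists_bounds_of_lipNorm_le_one [CompactSpace U] [Nonempty U] {φ : U → ℝ}
    {K : NNReal} (hφ : LipschitzWith K φ) (hnorm : lipNorm φ ≤ 1) :
    ∃ s L : ℝ, 0 ≤ s ∧ 0 ≤ L ∧ s + L ≤ 1 ∧
      (∀ u, |φ u| ≤ s) ∧ ∀ u v, |φ u - φ v| ≤ L * dist u v := by
  have hs : ∀ u, |φ u| ≤ ⨆ w, |φ w| :=
    le_ciSup (isCompact_range hφ.continuous.abs).bddAbove
  exact ⟨_, _, (abs_nonneg _).trans (hs (Classical.arbitrary U)), lipConst_nonneg φ, hnorm,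
    hs, abs_sub_le_lipConst_mul_dist hφ⟩

lemma blNormOf_le {I : (U → ℝ) → ℝ} {C : ℝ}
    (h : ∀ φ : U → ℝ, (∃ K, LipschitzWith K φ) → lipNorm φ ≤ 1 → I φ ≤ C) (hC : 0 ≤ C) :
    blNormOf I ≤ C :=
  Real.sSup_le (by rintro _ ⟨φ, hφ, hnorm, rfl⟩; exact h φ hφ hnorm) hC

lemma abs_mul_sub_mul_le {φ h : U → ℝ} {s L A K : ℝ} (hs : ∀ u, |φ u| ≤ s)
    (hL : ∀ u v, |φ u - φ v| ≤ L * dist u v) (hA : ∀ u, |h u| ≤ A)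
    (hK : ∀ u v, |h u - h v| ≤ K * dist u v) (u v : U) :
    |φ u * h u - φ v * h v| ≤ (s * K + L * A) * dist u v := by
  have hs0 : 0 ≤ s := (abs_nonneg _).trans (hs u)
  calc |φ u * h u - φ v * h v| = |φ u * (h u - h v) + (φ u - φ v) * h v| := by ring_nf
    _ ≤ |φ u| * |h u - h v| + |φ u - φ v| * |h v| := by
      rw [← abs_mul, ← abs_mul]; exact abs_add_le _ _
    _ ≤ s * (K * dist u v) + L * dist u v * A := by
      gcongr
      · exact hs u
      · exact hK u v
      · exact (abs_nonneg _).trans (hL u v)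
      · exact hL u v
      · exact hA v
    _ = (s * K + L * A) * dist u v := by ring

end LipNorm

section Integrals

variable {α : Type*} [MeasurableSpace α] {μ : Measure α} [IsProbabilityMeasure μ]

lemma abs_integral_le_of_abs_le {f : α → ℝ} {C : ℝ} (hf : ∀ u, |f u| ≤ C) :
    |∫ u, f u ∂μ| ≤ C := by
  simpa using norm_integral_le_of_norm_le_const (μ := μ) (f := f) (.of_forall hf)

lemma abs_integral_sub_integral_le {f g : α → ℝ} {ε : ℝ} (hf : Integrable f μ)
    (hg : Integrable g μ) (hfg : ∀ u, |f u - g u| ≤ ε) :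
    |∫ u, f u ∂μ - ∫ u, g u ∂μ| ≤ ε := by
  rw [← integral_sub hf hg]
  exact abs_integral_le_of_abs_le hfg

lemma Continuous.integrable_of_compactSpace [TopologicalSpace α] [OpensMeasurableSpace α]
    [CompactSpace α] {f : α → ℝ} (hf : Continuous f) : Integrable f μ :=
  hf.integrable_of_hasCompactSupport (.of_compactSpace f)

end Integrals

section BLDistance

variable {U : Type*} [MetricSpace U] [CompactSpace U] [MeasurableSpace U]
  (μ ν : Measure U) [IsProbabilityMeasure μ] [IsProbabilityMeasure ν]

noncomputable def blDist : ℝ := blNormOf fun φ => ∫ u, φ u ∂μ - ∫ u, φ u ∂ν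

lemma integral_sub_integral_le_blDist {φ : U → ℝ} (hφ : ∃ K, LipschitzWith K φ)
    (hnorm : lipNorm φ ≤ 1) : ∫ u, φ u ∂μ - ∫ u, φ u ∂ν ≤ blDist μ ν := by
  have := nonempty_of_isProbabilityMeasure μ
  refine le_csSup ⟨2, ?_⟩ ⟨φ, hφ, hnorm, rfl⟩
  rintro _ ⟨ψ, ⟨K, hψ⟩, hψnorm, rfl⟩
  obtain ⟨s, L, -, hL0, hsL, hs, -⟩ := exists_bounds_of_lipNorm_le_one hψ hψnorm
  have hψ1 : ∀ u, |ψ u| ≤ 1 := fun u => (hs u).trans (by linarith)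
  have hμ := abs_le.mp (abs_integral_le_of_abs_le (μ := μ) hψ1)
  have hν := abs_le.mp (abs_integral_le_of_abs_le (μ := ν) hψ1)
  linarith [hμ.2, hν.1]

lemma blDist_nonneg : 0 ≤ blDist μ ν := by
  have := nonempty_of_isProbabilityMeasure μ
  have h := integral_sub_integral_le_blDist μ ν (φ := 0) ⟨0, LipschitzWith.const 0⟩
    ((lipNorm_le (A := 0) (K := 0) (by simp) le_rfl (by simp)).trans (by norm_num))
  simpa using h

variable {μ ν}

lemma integral_sub_integral_le_mul_blDist {f : U → ℝ} {A K : ℝ} (hA : ∀ u, |f u| ≤ A)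
    (hK0 : 0 ≤ K) (hK : ∀ u v, |f u - f v| ≤ K * dist u v) :
    ∫ u, f u ∂μ - ∫ u, f u ∂ν ≤ (A + K) * blDist μ ν := by
  have := nonempty_of_isProbabilityMeasure μ
  have hA0 : 0 ≤ A := (abs_nonneg _).trans (hA (Classical.arbitrary U))
  rcases (add_nonneg hA0 hK0).eq_or_lt with hc | hc
  · have hf : f = 0 := funext fun u => abs_nonpos_iff.mp ((hA u).trans (by linarith))
    simp [hf, ← hc]
  set c := A + K
  have hlip : ∀ u v, |f u / c - f v / c| ≤ K / c * dist u v := fun u v => by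
    rw [div_sub_div_same, abs_div, abs_of_pos hc, div_mul_eq_mul_div]
    gcongr
    exact hK u v
  have hnorm : lipNorm (fun u => f u / c) ≤ 1 := by
    refine (lipNorm_le (A := A / c) (fun u => ?_) (by positivity) hlip).trans_eq ?_
    · rw [abs_div, abs_of_pos hc]; gcongr; exact hA u
    · rw [← add_div, div_self hc.ne']
  have h := integral_sub_integral_le_blDist μ ν
    ⟨_, lipschitzWith_toNNReal_of_abs_sub_le (by positivity) hlip⟩ hnorm
  rw [integral_div, integral_div, div_sub_div_same, div_le_iff₀ hc] at h
  linarith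

lemma abs_integral_sub_integral_le_mul_blDist {f : U → ℝ} {A K : ℝ} (hA : ∀ u, |f u| ≤ A)
    (hK0 : 0 ≤ K) (hK : ∀ u v, |f u - f v| ≤ K * dist u v) :
    |∫ u, f u ∂μ - ∫ u, f u ∂ν| ≤ (A + K) * blDist μ ν := by
  have hneg := integral_sub_integral_le_mul_blDist (μ := μ) (ν := ν) (f := fun u => -f u)
    (fun u => (abs_neg (f u)).trans_le (hA u)) hK0
    (fun u v => by rw [neg_sub_neg, abs_sub_comm]; exact hK u v)
  rw [integral_neg, integral_neg] at hneg
  exact abs_le.mpr ⟨by linarith, integral_sub_integral_le_mul_blDist hA hK0 hK⟩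

variable [BorelSpace U]

/-- Subtracting the constant `f u₀` makes `f` bounded by `K diam U` without changing
`∫ f dμ - ∫ f dν`. -/
lemma abs_integral_sub_integral_le_of_lipschitz {f : U → ℝ} {K : ℝ} (hK0 : 0 ≤ K)
    (hK : ∀ u v, |f u - f v| ≤ K * dist u v) :
    |∫ u, f u ∂μ - ∫ u, f u ∂ν| ≤ K * (1 + Metric.diam (Set.univ : Set U)) * blDist μ ν := by
  obtain ⟨u₀⟩ := nonempty_of_isProbabilityMeasure μ
  have hf := (lipschitzWith_toNNReal_of_abs_sub_le hK0 hK).continuous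
  have hbd : ∀ u, |f u - f u₀| ≤ K * Metric.diam (Set.univ : Set U) := fun u =>
    (hK u u₀).trans (mul_le_mul_of_nonneg_left
      (Metric.dist_le_diam_of_mem isCompact_univ.isBounded trivial trivial) hK0)
  have h := abs_integral_sub_integral_le_mul_blDist (μ := μ) (ν := ν) hbd hK0
    (fun u v => by rw [sub_sub_sub_cancel_right]; exact hK u v)
  rw [integral_sub hf.integrable_of_compactSpace (integrable_const _),
    integral_sub hf.integrable_of_compactSpace (integrable_const _)] at h
  simp only [integral_const, probReal_univ, one_smul, sub_sub_sub_cancel_right] at h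
  linarith

end BLDistance

section CenteredPairing

variable {U : Type*} [MetricSpace U] [CompactSpace U] [MeasurableSpace U] [BorelSpace U]

noncomputable def centeredPairing (σ : Measure U) (φ G : U → ℝ) : ℝ :=
  ∫ u, φ u * (G u - ∫ w, G w ∂σ) ∂σ

lemma centeredPairing_sub_le_of_abs_sub_le (σ : Measure U) [IsProbabilityMeasure σ]
    {φ G₁ G₂ : U → ℝ} (hφc : Continuous φ) (hφ : ∀ u, |φ u| ≤ 1) (hG₁ : Continuous G₁)
    (hG₂ : Continuous G₂) {ε : ℝ} (hG : ∀ u, |G₁ u - G₂ u| ≤ ε) :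
    centeredPairing σ φ G₁ - centeredPairing σ φ G₂ ≤ 2 * ε := by
  have hc := abs_integral_sub_integral_le (μ := σ) hG₁.integrable_of_compactSpace
    hG₂.integrable_of_compactSpace hG
  refine le_of_abs_le (abs_integral_sub_integral_le
    (hφc.mul (hG₁.sub continuous_const)).integrable_of_compactSpace
    (hφc.mul (hG₂.sub continuous_const)).integrable_of_compactSpace fun u => ?_)
  calc |φ u * (G₁ u - ∫ w, G₁ w ∂σ) - φ u * (G₂ u - ∫ w, G₂ w ∂σ)|
      = |φ u| * |(G₁ u - G₂ u) - (∫ w, G₁ w ∂σ - ∫ w, G₂ w ∂σ)| := by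
        rw [← abs_mul]; ring_nf
    _ ≤ 1 * (ε + ε) := by
        gcongr
        · exact hφ u
        · exact (abs_sub _ _).trans (add_le_add (hG u) hc)
    _ = 2 * ε := by ring

lemma centeredPairing_sub_centeredPairing_le (σ₁ σ₂ : Measure U) [IsProbabilityMeasure σ₁]
    [IsProbabilityMeasure σ₂] {φ G : U → ℝ} (hφc : Continuous φ) {s L : ℝ} (hL0 : 0 ≤ L)
    (hsL : s + L ≤ 1) (hs : ∀ u, |φ u| ≤ s) (hL : ∀ u v, |φ u - φ v| ≤ L * dist u v)
    {K : ℝ} (hK0 : 0 ≤ K) (hK : ∀ u v, |G u - G v| ≤ K * dist u v) :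
    centeredPairing σ₁ φ G - centeredPairing σ₂ φ G ≤
      2 * K * (1 + Metric.diam (Set.univ : Set U)) * blDist σ₁ σ₂ := by
  obtain ⟨u₀⟩ := nonempty_of_isProbabilityMeasure σ₁
  set D := Metric.diam (Set.univ : Set U)
  set B := blDist σ₁ σ₂
  set c₁ := ∫ w, G w ∂σ₁
  set c₂ := ∫ w, G w ∂σ₂
  have hs0 : 0 ≤ s := (abs_nonneg _).trans (hs u₀)
  have hD0 : 0 ≤ D := Metric.diam_nonneg
  have hGc := (lipschitzWith_toNNReal_of_abs_sub_le hK0 hK).continuous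
  have hGc₁ : ∀ u, |G u - c₁| ≤ K * D := fun u => by
    have := abs_integral_sub_integral_le (μ := σ₁) (integrable_const (G u))
      hGc.integrable_of_compactSpace fun w => (hK u w).trans (mul_le_mul_of_nonneg_left
        (Metric.dist_le_diam_of_mem isCompact_univ.isBounded trivial trivial) hK0)
    simpa using this
  have hmoved : |∫ u, φ u * (G u - c₁) ∂σ₁ - ∫ u, φ u * (G u - c₁) ∂σ₂| ≤
      (s * (K * D) + (s * K + L * (K * D))) * B :=
    abs_integral_sub_integral_le_mul_blDist
      (fun u => by rw [abs_mul]; gcongr; exacts [hs u, hGc₁ u]) (by positivity)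
      (abs_mul_sub_mul_le hs hL hGc₁ fun u v => by simpa using hK u v)
  have hconst : |c₁ - c₂| ≤ K * (1 + D) * B := abs_integral_sub_integral_le_of_lipschitz hK0 hK
  have hφ₂ : |∫ u, φ u ∂σ₂| ≤ s := abs_integral_le_of_abs_le hs
  have hsplit : centeredPairing σ₂ φ G =
      ∫ u, φ u * (G u - c₁) ∂σ₂ + (c₁ - c₂) * ∫ u, φ u ∂σ₂ := by
    have hi : Integrable (fun u => φ u * (G u - c₁)) σ₂ :=
      (hφc.mul (hGc.sub continuous_const)).integrable_of_compactSpace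
    rw [← integral_const_mul, ← integral_add hi (hφc.integrable_of_compactSpace.const_mul _)]
    exact integral_congr_ae (.of_forall fun u => by ring)
  have hB0 : 0 ≤ B := blDist_nonneg σ₁ σ₂
  calc centeredPairing σ₁ φ G - centeredPairing σ₂ φ G
      = (∫ u, φ u * (G u - c₁) ∂σ₁ - ∫ u, φ u * (G u - c₁) ∂σ₂) -
          (c₁ - c₂) * ∫ u, φ u ∂σ₂ := by rw [hsplit]; unfold centeredPairing; ring
    _ ≤ (s * (K * D) + (s * K + L * (K * D))) * B + K * (1 + D) * B * s := by
        rw [sub_eq_add_neg]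
        gcongr
        · exact le_of_abs_le hmoved
        · refine (neg_le_abs _).trans ?_
          rw [abs_mul]
          exact mul_le_mul hconst hφ₂ (abs_nonneg _) (by positivity)
    _ ≤ 2 * K * (1 + D) * B := by
        have : 2 * s + 2 * s * D + L * D ≤ 2 + 2 * D := by nlinarith
        nlinarith [mul_nonneg hK0 hB0]

end CenteredPairing

section Interaction

variable {X U : Type*} [PseudoMetricSpace X] [MetricSpace U] {J : X × U → X × U → ℝ}
  {LJ : NNReal}

lemma abs_sub_le_of_lipschitzWith (hJ : LipschitzWith LJ fun p : (X × U) × (X × U) => J p.1 p.2)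
    (x y x' y' : X) (u v u' v' : U) :
    |J (x, u) (x', u') - J (y, v) (y', v')| ≤
      LJ * (dist x y + dist u v + dist x' y' + dist u' v') := by
  have h := hJ.dist_le_mul ((x, u), (x', u')) ((y, v), (y', v'))
  rw [Real.dist_eq] at h
  refine h.trans (mul_le_mul_of_nonneg_left ?_ LJ.coe_nonneg)
  simp only [Prod.dist_eq]
  refine max_le (max_le ?_ ?_) (max_le ?_ ?_) <;> linarith [dist_nonneg (x := x) (y := y),
    dist_nonneg (x := u) (y := v), dist_nonneg (x := x') (y := y'), dist_nonneg (x := u') (y := v')]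

variable [CompactSpace U] [MeasurableSpace U] [BorelSpace U]

noncomputable def meanInteraction (J : X × U → X × U → ℝ) (σ' : Measure U) (x x' : X) (u : U) :
    ℝ :=
  ∫ u', J (x, u) (x', u') ∂σ'

lemma abs_meanInteraction_sub_le (hJ : LipschitzWith LJ fun p : (X × U) × (X × U) => J p.1 p.2)
    (σ' : Measure U) [IsProbabilityMeasure σ'] (x y x' y' : X) (u v : U) :
    |meanInteraction J σ' x x' u - meanInteraction J σ' y y' v| ≤
      LJ * (dist x y + dist u v + dist x' y') := by
  have hc : ∀ x x' u, Continuous fun u' => J (x, u) (x', u') := fun x x' u =>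
    hJ.continuous.comp (f := fun u' => ((x, u), (x', u'))) (by fun_prop)
  refine abs_integral_sub_integral_le (hc x x' u).integrable_of_compactSpace
    (hc y y' v).integrable_of_compactSpace fun u' => ?_
  simpa using abs_sub_le_of_lipschitzWith hJ x y x' y' u v u' u'

lemma abs_meanInteraction_sub_le_mul_dist
    (hJ : LipschitzWith LJ fun p : (X × U) × (X × U) => J p.1 p.2)
    (σ' : Measure U) [IsProbabilityMeasure σ'] (x x' : X) (u v : U) :
    |meanInteraction J σ' x x' u - meanInteraction J σ' x x' v| ≤ LJ * dist u v := by
  simpa using abs_meanInteraction_sub_le hJ σ' x x x' x' u v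

lemma continuous_meanInteraction (hJ : LipschitzWith LJ fun p : (X × U) × (X × U) => J p.1 p.2)
    (σ' : Measure U) [IsProbabilityMeasure σ'] (x x' : X) :
    Continuous (meanInteraction J σ' x x') :=
  (lipschitzWith_toNNReal_of_abs_sub_le LJ.coe_nonneg
    (abs_meanInteraction_sub_le_mul_dist hJ σ' x x')).continuous

lemma abs_meanInteraction_sub_meanInteraction_le
    (hJ : LipschitzWith LJ fun p : (X × U) × (X × U) => J p.1 p.2)
    (σ₁' σ₂' : Measure U) [IsProbabilityMeasure σ₁'] [IsProbabilityMeasure σ₂'] (x x' : X)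
    (u : U) :
    |meanInteraction J σ₁' x x' u - meanInteraction J σ₂' x x' u| ≤
      LJ * (1 + Metric.diam (Set.univ : Set U)) * blDist σ₁' σ₂' :=
  abs_integral_sub_integral_le_of_lipschitz LJ.coe_nonneg fun u' v' => by
    simpa using abs_sub_le_of_lipschitzWith hJ x x x' x' u u u' v'

end Interaction

lemma fσPair_eq_centeredPairing {U : Type*} [MetricSpace U] [MeasurableSpace U] {d : ℕ}
    (J : (EuclideanSpace ℝ (Fin d) × U) → (EuclideanSpace ℝ (Fin d) × U) → ℝ)
    (x x' : EuclideanSpace ℝ (Fin d)) (σ σ' : Measure U) (φ : U → ℝ) :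
    fσPair J x x' σ σ' φ = centeredPairing σ φ (meanInteraction J σ' x x') :=
  rfl

/-- Lipschitz estimate for the replicator interaction term `f_σ` in the BL norm:
`‖f_σ(y₁,y₁') − f_σ(y₂,y₂')‖_BL ≤ 2L_J(1+diam U)(|x₁−x₂| + ‖σ₁−σ₂‖_BL +
|x₁'−x₂'| + ‖σ₁'−σ₂'‖_BL)`. -/
theorem stmt17 {U : Type*} [MetricSpace U] [CompactSpace U]
    [MeasurableSpace U] [BorelSpace U] {d : ℕ}
    (J : (EuclideanSpace ℝ (Fin d) × U) → (EuclideanSpace ℝ (Fin d) × U) → ℝ)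
    (LJ : NNReal)
    (hJ : LipschitzWith LJ
      (fun p : (EuclideanSpace ℝ (Fin d) × U) × (EuclideanSpace ℝ (Fin d) × U) =>
        J p.1 p.2))
    (x₁ x₂ x₁' x₂' : EuclideanSpace ℝ (Fin d)) (σ₁ σ₂ σ₁' σ₂' : Measure U)
    [IsProbabilityMeasure σ₁] [IsProbabilityMeasure σ₂]
    [IsProbabilityMeasure σ₁'] [IsProbabilityMeasure σ₂'] :
    blNormOf (fun φ => fσPair J x₁ x₁' σ₁ σ₁' φ - fσPair J x₂ x₂' σ₂ σ₂' φ) ≤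
      2 * (LJ : ℝ) * (1 + Metric.diam (Set.univ : Set U)) *
        (dist x₁ x₂ + blNormOf (fun φ => ∫ u, φ u ∂σ₁ - ∫ u, φ u ∂σ₂) +
         dist x₁' x₂' + blNormOf (fun φ => ∫ u, φ u ∂σ₁' - ∫ u, φ u ∂σ₂')) := by
  change blNormOf _ ≤ 2 * LJ * (1 + Metric.diam (Set.univ : Set U)) *
    (dist x₁ x₂ + blDist σ₁ σ₂ + dist x₁' x₂' + blDist σ₁' σ₂')
  have := nonempty_of_isProbabilityMeasure σ₁
  have hB := blDist_nonneg σ₁ σ₂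
  have hB' := blDist_nonneg σ₁' σ₂'
  refine blNormOf_le (fun φ ⟨K, hφ⟩ hnorm => ?_) (by positivity)
  obtain ⟨s, L, -, hL0, hsL, hs, hL⟩ := exists_bounds_of_lipNorm_le_one hφ hnorm
  have hφ1 : ∀ u, |φ u| ≤ 1 := fun u => (hs u).trans (by linarith)
  have step₁ := centeredPairing_sub_le_of_abs_sub_le σ₁ hφ.continuous hφ1
    (continuous_meanInteraction hJ σ₁' x₁ x₁') (continuous_meanInteraction hJ σ₁' x₂ x₂')
    fun u => by simpa using abs_meanInteraction_sub_le hJ σ₁' x₁ x₂ x₁' x₂' u u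
  have step₂ := centeredPairing_sub_centeredPairing_le σ₁ σ₂ hφ.continuous hL0 hsL hs hL
    LJ.coe_nonneg (abs_meanInteraction_sub_le_mul_dist hJ σ₁' x₂ x₂')
  have step₃ := centeredPairing_sub_le_of_abs_sub_le σ₂ hφ.continuous hφ1
    (continuous_meanInteraction hJ σ₁' x₂ x₂') (continuous_meanInteraction hJ σ₂' x₂ x₂')
    (abs_meanInteraction_sub_meanInteraction_le hJ σ₁' σ₂' x₂ x₂')
  rw [fσPair_eq_centeredPairing, fσPair_eq_centeredPairing]
  have hdiam : 0 ≤ Metric.diam (Set.univ : Set U) := Metric.diam_nonneg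
  have hx := add_nonneg (dist_nonneg (x := x₁) (y := x₂)) (dist_nonneg (x := x₁') (y := x₂'))
  nlinarith [mul_nonneg (mul_nonneg LJ.coe_nonneg hdiam) hx]
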